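/- Let j, m, n, p be positive integers with p+1−j−m−n > 0. Then the series Σ_{k=0}^{∞} (j)_k (m)_k (n)_k / ((p)_k · (k!)²) converges and equals [Γ(n)·Γ(j)·Γ(p)·Γ(p−m+1−j−n) / (Γ(m)·Γ(p−m))] · Σ_{k=0}^{min(j−1, n−1)} Γ(m+k) / (Γ(n−k)·Γ(j−k)·(k!)²·Γ(p+1−j−n+k)). -/
import Mathlib


open scoped BigOperators
open Finset

/-- Pochhammer (ascending factorial) `(x)_k = x (x+1) ⋯ (x+k-1)`. -/
noncomputable def poch (x : ℝ) (k : ℕ) : ℝ := Polynomial.eval x (ascPochhammer ℝ k)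



/- ratio lemmas -/
lemma nat_ratio_k (a k : ℕ) :
    (a + (k+1)).choose (k+1) * (k+1) = (a+k).choose k * (a+k+1) := by
  have h := Nat.add_one_mul_choose_eq (a+k) k
  have e : a + (k+1) = (a+k)+1 := by omega
  rw [e, ← h, Nat.mul_comm]

lemma nat_ratio_a (a k : ℕ) :
    ((a+1)+k).choose k * (a+1) = (a+k).choose k * (a+k+1) := by
  have h := Nat.add_one_mul_choose_eq (a+k) a
  have h1 : (a+k).choose a = (a+k).choose k := by
    have := Nat.choose_symm (n := a+k) (k := a) (by omega)
    simpa [show a + k - a = k by omega] using this.symm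
  have h2 : ((a+k)+1).choose (a+1) = ((a+1)+k).choose k := by
    have := Nat.choose_symm (n := a+k+1) (k := a+1) (by omega)
    simp only [show a + k + 1 - (a+1) = k by omega] at this
    rw [← this]
    congr 1
    omega
  rw [h1, h2] at h
  rw [← h, Nat.mul_comm]

lemma nat_upper (a k : ℕ) : (a+k).choose k ≤ (k+1)^a := by
  induction a with
  | zero => simp
  | succ a ih =>
    have hr := nat_ratio_a a k
    have h1 : (a+k).choose k * (a+k+1) ≤ (k+1)^a * ((k+1) * (a+1)) := by
      apply Nat.mul_le_mul ih (by nlinarith)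
    have h2 : ((a+1)+k).choose k * (a+1) ≤ ((k+1)^(a+1)) * (a+1) := by
      rw [hr]
      calc (a+k).choose k * (a+k+1) ≤ (k+1)^a * ((k+1) * (a+1)) := h1
        _ = (k+1)^(a+1) * (a+1) := by ring
    exact Nat.le_of_mul_le_mul_right h2 (by omega)

lemma nat_lower (a k : ℕ) : (k+1)^a ≤ (a+k).choose k * a.factorial := by
  induction a with
  | zero => simp
  | succ a ih =>
    have hr := nat_ratio_a a k
    have h1 : (k+1)^(a+1) ≤ (a+k).choose k * a.factorial * (k+1) := by
      calc (k+1)^(a+1) = (k+1)^a * (k+1) := by ring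
        _ ≤ (a+k).choose k * a.factorial * (k+1) := Nat.mul_le_mul_right _ ih
    calc (k+1)^(a+1) ≤ (a+k).choose k * a.factorial * (k+1) := h1
      _ ≤ (a+k).choose k * (a+k+1) * a.factorial := by
          rw [Nat.mul_right_comm]
          exact Nat.mul_le_mul_right _ (Nat.mul_le_mul_left _ (by omega))
      _ = ((a+1)+k).choose k * (a+1) * a.factorial := by rw [hr]
      _ = ((a+1)+k).choose k * (a+1).factorial := by
          rw [Nat.factorial_succ]; ring

/-- subset-chain identity -/
lemma choose_chain {n k i : ℕ} (hik : i ≤ k) (hkn : k ≤ n) :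
    n.choose k * k.choose i = n.choose i * (n-i).choose (k-i) := by
  have key : n.choose k * k.choose i * (i.factorial * (k-i).factorial * (n-k).factorial)
      = n.choose i * (n-i).choose (k-i) * (i.factorial * (k-i).factorial * (n-k).factorial) := by
    have e1 : k.choose i * i.factorial * (k-i).factorial = k.factorial :=
      Nat.choose_mul_factorial_mul_factorial hik
    have e2 : n.choose k * k.factorial * (n-k).factorial = n.factorial :=
      Nat.choose_mul_factorial_mul_factorial hkn
    have e3 : (n-i).choose (k-i) * (k-i).factorial * ((n-i)-(k-i)).factorial
        = (n-i).factorial := Nat.choose_mul_factorial_mul_factorial (by omega)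
    have e4 : n.choose i * i.factorial * (n-i).factorial = n.factorial :=
      Nat.choose_mul_factorial_mul_factorial (le_trans hik hkn)
    have h5 : (n-i)-(k-i) = n-k := by omega
    rw [h5] at e3
    calc n.choose k * k.choose i * (i.factorial * (k-i).factorial * (n-k).factorial)
        = (k.choose i * i.factorial * (k-i).factorial) * (n.choose k * (n-k).factorial) := by ring
      _ = k.factorial * (n.choose k * (n-k).factorial) := by rw [e1]
      _ = n.choose k * k.factorial * (n-k).factorial := by ring
      _ = n.factorial := e2
      _ = n.choose i * i.factorial * (n-i).factorial := e4.symm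
      _ = n.choose i * i.factorial * ((n-i).choose (k-i) * (k-i).factorial * (n-k).factorial) := by rw [e3]
      _ = n.choose i * (n-i).choose (k-i) * (i.factorial * (k-i).factorial * (n-k).factorial) := by ring
  exact Nat.eq_of_mul_eq_mul_right
    (by positivity) key

lemma choose_split (y i s : ℕ) :
    y.choose i * (y-i).choose s = y.choose (i+s) * (i+s).choose i := by
  by_cases h : i + s ≤ y
  · have := choose_chain (n := y) (k := i+s) (i := i) (by omega) h
    rw [this, show (i+s) - i = s by omega]
  · by_cases hi : i ≤ y
    · have h1 : y.choose (i+s) = 0 := Nat.choose_eq_zero_of_lt (by omega)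
      have h2 : (y-i).choose s = 0 := Nat.choose_eq_zero_of_lt (by omega)
      rw [h1, h2]; ring
    · have h1 : y.choose i = 0 := Nat.choose_eq_zero_of_lt (by omega)
      have h2 : y.choose (i+s) = 0 := Nat.choose_eq_zero_of_lt (by omega)
      rw [h1, h2]; ring

lemma vandermonde_range (y k : ℕ) :
    (y+k).choose k = ∑ i ∈ range (k+1), y.choose i * k.choose i := by
  rw [Nat.add_choose_eq, Finset.Nat.sum_antidiagonal_eq_sum_range_succ_mk]
  apply Finset.sum_congr rfl
  intro i hi
  simp only [mem_range] at hi
  congr 1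
  exact Nat.choose_symm (by omega)


lemma cross (x k u : ℕ) (h : u ≤ k) :
    (x+u).choose u * (x+k).choose (k-u) = (x+k).choose u * ((x+k)-u).choose (k-u) := by
  have e1 : (x+u).choose u * u.factorial * x.factorial = (x+u).factorial := by
    have := Nat.choose_mul_factorial_mul_factorial (n := x+u) (k := u) (by omega)
    simpa [show x+u-u = x by omega] using this
  have e2 : (x+k).choose (k-u) * (k-u).factorial * (x+u).factorial = (x+k).factorial := by
    have := Nat.choose_mul_factorial_mul_factorial (n := x+k) (k := k-u) (by omega)
    simpa [show x+k-(k-u) = x+u by omega] using this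
  have e3 : (x+k).choose u * u.factorial * (x+k-u).factorial = (x+k).factorial := by
    have := Nat.choose_mul_factorial_mul_factorial (n := x+k) (k := u) (by omega)
    simpa using this
  have e4 : (x+k-u).choose (k-u) * (k-u).factorial * x.factorial = (x+k-u).factorial := by
    have := Nat.choose_mul_factorial_mul_factorial (n := x+k-u) (k := k-u) (by omega)
    simpa [show x+k-u-(k-u) = x by omega] using this
  have key : (x+u).choose u * (x+k).choose (k-u) * (u.factorial * ((k-u).factorial * x.factorial))
      = (x+k).choose u * ((x+k)-u).choose (k-u) * (u.factorial * ((k-u).factorial * x.factorial)) := by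
    calc (x+u).choose u * (x+k).choose (k-u) * (u.factorial * ((k-u).factorial * x.factorial))
        = ((x+k).choose (k-u) * (k-u).factorial) * ((x+u).choose u * u.factorial * x.factorial) := by ring
      _ = ((x+k).choose (k-u) * (k-u).factorial) * (x+u).factorial := by rw [e1]
      _ = (x+k).choose (k-u) * (k-u).factorial * (x+u).factorial := by ring
      _ = (x+k).factorial := e2
      _ = (x+k).choose u * u.factorial * (x+k-u).factorial := e3.symm
      _ = (x+k).choose u * u.factorial * ((x+k-u).choose (k-u) * (k-u).factorial * x.factorial) := by rw [e4]
      _ = (x+k).choose u * ((x+k)-u).choose (k-u) * (u.factorial * ((k-u).factorial * x.factorial)) := by ring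
  exact Nat.eq_of_mul_eq_mul_right (by positivity) key


lemma suranyi (x y k : ℕ) :
    (x+k).choose k * (y+k).choose k
      = ∑ i ∈ range (k+1), x.choose i * y.choose i * ((x+y)+(k-i)).choose (k-i) := by
  have hL : (x+k).choose k * (y+k).choose k
      = ∑ u ∈ range (k+1), y.choose u * ((x+k).choose u * ((x+k)-u).choose (k-u)) := by
    rw [vandermonde_range y k, Finset.mul_sum]
    apply Finset.sum_congr rfl
    intro u hu
    simp only [mem_range] at hu
    have hc := choose_chain (n := x+k) (k := k) (i := u) (by omega) (by omega)
    calc (x+k).choose k * (y.choose u * k.choose u)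
        = y.choose u * ((x+k).choose k * k.choose u) := by ring
      _ = y.choose u * ((x+k).choose u * ((x+k)-u).choose (k-u)) := by rw [hc]
  have hR : ∑ i ∈ range (k+1), x.choose i * y.choose i * ((x+y)+(k-i)).choose (k-i)
      = ∑ i ∈ range (k+1), ∑ s ∈ range ((k-i)+1),
          x.choose i * ((i+s).choose i * (y.choose (i+s) * (x+k).choose (k-(i+s)))) := by
    apply Finset.sum_congr rfl
    intro i hi
    simp only [mem_range] at hi
    by_cases hiy : i ≤ y
    · have hv : ((x+y)+(k-i)).choose (k-i)
          = ∑ s ∈ range ((k-i)+1), (y-i).choose s * (x+k).choose ((k-i)-s) := by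
        have e : (x+y)+(k-i) = (y-i) + (x+k) := by omega
        rw [e, Nat.add_choose_eq, Finset.Nat.sum_antidiagonal_eq_sum_range_succ_mk]
      rw [hv, Finset.mul_sum]
      apply Finset.sum_congr rfl
      intro s hs
      have hsplit := choose_split y i s
      have e2 : (k-i)-s = k-(i+s) := by omega
      calc x.choose i * y.choose i * ((y-i).choose s * (x+k).choose ((k-i)-s))
          = x.choose i * ((y.choose i * (y-i).choose s) * (x+k).choose ((k-i)-s)) := by ring
        _ = x.choose i * ((y.choose (i+s) * (i+s).choose i) * (x+k).choose (k-(i+s))) := by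
              rw [hsplit, e2]
        _ = x.choose i * ((i+s).choose i * (y.choose (i+s) * (x+k).choose (k-(i+s)))) := by ring
    · have h0 : y.choose i = 0 := Nat.choose_eq_zero_of_lt (by omega)
      rw [h0]
      simp only [Nat.mul_zero, Nat.zero_mul, mul_zero, zero_mul]
      symm
      apply Finset.sum_eq_zero
      intro s hs
      have h1 : y.choose (i+s) = 0 := Nat.choose_eq_zero_of_lt (by omega)
      rw [h1]; ring
  have hswap : ∑ i ∈ range (k+1), ∑ s ∈ range ((k-i)+1),
          x.choose i * ((i+s).choose i * (y.choose (i+s) * (x+k).choose (k-(i+s))))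
      = ∑ u ∈ range (k+1), ∑ i ∈ range (u+1),
          x.choose i * (u.choose i * (y.choose u * (x+k).choose (k-u))) := by
    rw [Finset.sum_sigma', Finset.sum_sigma']
    apply Finset.sum_nbij' (i := fun q => (⟨q.1 + q.2, q.1⟩ : Σ _ : ℕ, ℕ))
      (j := fun q => (⟨q.2, q.1 - q.2⟩ : Σ _ : ℕ, ℕ))
    · intro a ha
      simp only [Finset.mem_sigma, mem_range] at ha ⊢
      omega
    · intro b hb
      simp only [Finset.mem_sigma, mem_range] at hb ⊢
      omega
    · intro a ha
      simp only [Finset.mem_sigma, mem_range] at ha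
      simp
    · intro b hb
      obtain ⟨u, i⟩ := b
      simp only [Finset.mem_sigma, mem_range] at hb
      have e : i + (u - i) = u := by omega
      simp [e]
    · intro a ha
      rfl
  rw [hR, hswap, hL]
  apply Finset.sum_congr rfl
  intro u hu
  simp only [mem_range] at hu
  symm
  have hv : ∑ i ∈ range (u+1), x.choose i * u.choose i = (x+u).choose u := (vandermonde_range x u).symm
  calc ∑ i ∈ range (u+1), x.choose i * (u.choose i * (y.choose u * (x+k).choose (k-u)))
      = (∑ i ∈ range (u+1), x.choose i * u.choose i) * (y.choose u * (x+k).choose (k-u)) := by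
        rw [Finset.sum_mul]; apply Finset.sum_congr rfl; intro i _; ring
    _ = (x+u).choose u * (y.choose u * (x+k).choose (k-u)) := by rw [hv]
    _ = ((x+u).choose u * (x+k).choose (k-u)) * y.choose u := by ring
    _ = ((x+k).choose u * ((x+k)-u).choose (k-u)) * y.choose u := by rw [cross x k u (by omega)]
    _ = y.choose u * ((x+k).choose u * ((x+k)-u).choose (k-u)) := by ring


noncomputable def ch (a k : ℕ) : ℝ := ((a+k).choose k : ℝ)


lemma ch_pos (a k : ℕ) : 0 < ch a k := by
  have : 0 < (a+k).choose k := Nat.choose_pos (by omega)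
  unfold ch
  exact_mod_cast this

lemma ch_ne (a k : ℕ) : ch a k ≠ 0 := ne_of_gt (ch_pos a k)

lemma ch_zero (a : ℕ) : ch a 0 = 1 := by simp [ch]

lemma ch_zero_left (k : ℕ) : ch 0 k = 1 := by simp [ch]

lemma ch_ratio_k (a k : ℕ) : ch a (k+1) * (k+1) = ch a k * (a+k+1) := by
  have := nat_ratio_k a k
  unfold ch
  exact_mod_cast this

lemma ch_ratio_a (a k : ℕ) : ch (a+1) k * (a+1) = ch a k * (a+k+1) := by
  have := nat_ratio_a a k
  unfold ch
  exact_mod_cast this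

lemma ch_upper (a k : ℕ) : ch a k ≤ ((k:ℝ)+1)^a := by
  have := nat_upper a k
  have h2 : ((a+k).choose k : ℝ) ≤ (((k+1)^a : ℕ) : ℝ) := by exact_mod_cast this
  simpa [ch] using h2

lemma ch_lower (a k : ℕ) : ((k:ℝ)+1)^a ≤ ch a k * a.factorial := by
  have := nat_lower a k
  have h2 : (((k+1)^a : ℕ):ℝ) ≤ (((a+k).choose k * a.factorial : ℕ):ℝ) := by exact_mod_cast this
  push_cast at h2
  simpa [ch] using h2

lemma one_div_ch_le (a k : ℕ) : 1 / ch a k ≤ (a.factorial : ℝ) / ((k:ℝ)+1)^a := by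
  rw [div_le_div_iff₀ (ch_pos a k) (by positivity)]
  have := ch_lower a k
  nlinarith [ch_pos a k]

/-- summability by `C/(k+1)^2` bound -/
lemma summable_sq (f : ℕ → ℝ) (C : ℝ) (h0 : ∀ k, 0 ≤ f k)
    (hb : ∀ k, f k ≤ C / ((k:ℝ)+1)^2) : Summable f := by
  have h1 : Summable (fun k : ℕ => C * (1 / ((k:ℝ))^2)) :=
    ((Real.summable_one_div_nat_pow (p := 2)).mpr (by norm_num)).mul_left C
  have h2 : Summable (fun k : ℕ => C / ((k:ℝ)+1)^2) := by
    have h3 := (summable_nat_add_iff (f := fun k : ℕ => C * (1 / ((k:ℝ))^2)) 1).mpr h1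
    apply h3.congr
    intro k
    push_cast
    rw [mul_one_div]
  exact Summable.of_nonneg_of_le h0 hb h2

lemma summable_D (a b c : ℕ) (h : a + b + 2 ≤ c) :
    Summable (fun k => ch a k * ch b k / ch c k) := by
  apply summable_sq _ (c.factorial : ℝ)
  · intro k
    have := ch_pos a k; have := ch_pos b k; have := ch_pos c k
    positivity
  · intro k
    have hab : ch a k * ch b k ≤ ((k:ℝ)+1)^a * ((k:ℝ)+1)^b :=
      mul_le_mul (ch_upper a k) (ch_upper b k) (le_of_lt (ch_pos b k)) (by positivity)
    have key : ch a k * ch b k / ch c k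
        ≤ (((k:ℝ)+1)^a * ((k:ℝ)+1)^b) * ((c.factorial:ℝ) / ((k:ℝ)+1)^c) := by
      rw [div_eq_mul_one_div (ch a k * ch b k)]
      exact mul_le_mul hab (one_div_ch_le c k)
        (le_of_lt (one_div_pos.mpr (ch_pos c k))) (by positivity)
    have e : ((k:ℝ)+1)^c = (((k:ℝ)+1)^a * ((k:ℝ)+1)^b) * ((k:ℝ)+1)^(c-a-b) := by
      rw [← pow_add, ← pow_add]; congr 1; omega
    have e2 : (((k:ℝ)+1)^a * ((k:ℝ)+1)^b) * ((c.factorial:ℝ) / ((k:ℝ)+1)^c)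
        = (c.factorial:ℝ) / ((k:ℝ)+1)^(c-a-b) := by
      rw [e]
      field_simp
    rw [e2] at key
    apply le_trans key
    have hk1 : (1:ℝ) ≤ (k:ℝ)+1 := by
      have := Nat.cast_nonneg (α := ℝ) k; linarith
    have h2 : ((k:ℝ)+1)^2 ≤ ((k:ℝ)+1)^(c-a-b) := pow_le_pow_right₀ hk1 (by omega)
    rw [div_le_div_iff₀ (by positivity) (by positivity)]
    exact mul_le_mul_of_nonneg_left h2 (Nat.cast_nonneg _)

lemma summable_E (x y z w : ℕ) (h : x + y + z + 2 ≤ w) :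
    Summable (fun k => ch x k * ch y k * ch z k / ch w k) := by
  apply summable_sq _ (w.factorial : ℝ)
  · intro k
    have := ch_pos x k; have := ch_pos y k; have := ch_pos z k; have := ch_pos w k
    positivity
  · intro k
    have hxyz : ch x k * ch y k * ch z k ≤ ((k:ℝ)+1)^x * ((k:ℝ)+1)^y * ((k:ℝ)+1)^z := by
      apply mul_le_mul _ (ch_upper z k) (le_of_lt (ch_pos z k)) (by positivity)
      exact mul_le_mul (ch_upper x k) (ch_upper y k) (le_of_lt (ch_pos y k)) (by positivity)
    have key : ch x k * ch y k * ch z k / ch w k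
        ≤ (((k:ℝ)+1)^x * ((k:ℝ)+1)^y * ((k:ℝ)+1)^z) * ((w.factorial:ℝ) / ((k:ℝ)+1)^w) := by
      rw [div_eq_mul_one_div (ch x k * ch y k * ch z k)]
      exact mul_le_mul hxyz (one_div_ch_le w k)
        (le_of_lt (one_div_pos.mpr (ch_pos w k))) (by positivity)
    have e : ((k:ℝ)+1)^w = (((k:ℝ)+1)^x * ((k:ℝ)+1)^y * ((k:ℝ)+1)^z) * ((k:ℝ)+1)^(w-x-y-z) := by
      rw [← pow_add, ← pow_add, ← pow_add]; congr 1; omega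
    have e2 : (((k:ℝ)+1)^x * ((k:ℝ)+1)^y * ((k:ℝ)+1)^z) * ((w.factorial:ℝ) / ((k:ℝ)+1)^w)
        = (w.factorial:ℝ) / ((k:ℝ)+1)^(w-x-y-z) := by
      rw [e]
      field_simp
    rw [e2] at key
    apply le_trans key
    have hk1 : (1:ℝ) ≤ (k:ℝ)+1 := by
      have := Nat.cast_nonneg (α := ℝ) k; linarith
    have h2 : ((k:ℝ)+1)^2 ≤ ((k:ℝ)+1)^(w-x-y-z) := pow_le_pow_right₀ hk1 (by omega)
    rw [div_le_div_iff₀ (by positivity) (by positivity)]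
    exact mul_le_mul_of_nonneg_left h2 (Nat.cast_nonneg _)


lemma poch_zero' (x : ℝ) : poch x 0 = 1 := by simp [poch]

lemma poch_succ (x : ℝ) (k : ℕ) : poch x (k+1) = poch x k * (x + k) := by
  simp [poch, ascPochhammer_succ_right]

lemma poch_nat (A k : ℕ) : poch ((A:ℝ)+1) k = ch A k * (k.factorial : ℝ) := by
  induction k with
  | zero => simp [poch_zero', ch_zero]
  | succ k ih =>
    rw [poch_succ, ih]
    have hr := ch_ratio_k A k
    have hk : ((k:ℝ)+1) ≠ 0 := by positivity
    have : ch A (k+1) = ch A k * ((A:ℝ)+(k:ℝ)+1) / ((k:ℝ)+1) := by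
      rw [eq_div_iff hk]
      exact_mod_cast hr
    rw [this, Nat.factorial_succ]
    push_cast
    field_simp
    ring

lemma base_hasSum (a e : ℕ) (h : a + 1 ≤ e) :
    HasSum (fun k => ch a k / ch (e+1) k) (((e:ℝ)+1)/((e:ℝ)-(a:ℝ))) := by
  have hea : (0:ℝ) < (e:ℝ)-(a:ℝ) := by
    have : (a:ℝ)+1 ≤ (e:ℝ) := by exact_mod_cast h
    linarith
  set u : ℕ → ℝ := fun k => (((e:ℝ)+1)/((e:ℝ)-(a:ℝ))) * (ch a k / ch e k) with hu
  have hterm : ∀ k, ch a k / ch (e+1) k = u k - u (k+1) := by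
    intro k
    have hk : ((k:ℝ)+1) ≠ 0 := by positivity
    have he1 : ((e:ℝ)+1) ≠ 0 := by positivity
    have hA' : ch a (k+1) = ch a k * ((a:ℝ)+(k:ℝ)+1) / ((k:ℝ)+1) := by
      rw [eq_div_iff hk]; exact_mod_cast ch_ratio_k a k
    have hE' : ch e (k+1) = ch e k * ((e:ℝ)+(k:ℝ)+1) / ((k:ℝ)+1) := by
      rw [eq_div_iff hk]; exact_mod_cast ch_ratio_k e k
    have hF : ch (e+1) k = ch e k * ((e:ℝ)+(k:ℝ)+1) / ((e:ℝ)+1) := by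
      rw [eq_div_iff he1]; exact_mod_cast ch_ratio_a e k
    have hEk : ch e k ≠ 0 := ch_ne e k
    have hek1 : ((e:ℝ)+(k:ℝ)+1) ≠ 0 := by positivity
    simp only [hu]
    rw [hA', hE', hF]
    field_simp
    ring
  have hsummable : Summable (fun k => ch a k / ch (e+1) k) := by
    have hD := summable_D a 0 (e+1) (by omega)
    apply hD.congr
    intro k
    rw [ch_zero_left, mul_one]
  have hpartial : ∀ N : ℕ, ∑ k ∈ range N, ch a k / ch (e+1) k = u 0 - u N := by
    intro N
    rw [Finset.sum_congr rfl (fun k _ => hterm k)]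
    exact Finset.sum_range_sub' u N
  have hu0 : u 0 = ((e:ℝ)+1)/((e:ℝ)-(a:ℝ)) := by
    simp [hu, ch_zero]
  have hCpos : 0 ≤ (((e:ℝ)+1)/((e:ℝ)-(a:ℝ))) := by positivity
  have hub : ∀ N : ℕ, u N ≤ ((((e:ℝ)+1)/((e:ℝ)-(a:ℝ))) * (e.factorial:ℝ)) * (1/((N:ℝ)+1)) := by
    intro N
    have hN1 : (1:ℝ) ≤ (N:ℝ)+1 := by
      have := Nat.cast_nonneg (α := ℝ) N; linarith
    have h1 : ch a N / ch e N ≤ ((N:ℝ)+1)^a * ((e.factorial:ℝ)/((N:ℝ)+1)^e) := by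
      rw [div_eq_mul_one_div]
      exact mul_le_mul (ch_upper a N) (one_div_ch_le e N)
        (le_of_lt (one_div_pos.mpr (ch_pos e N))) (by positivity)
    have e1 : ((N:ℝ)+1)^e = ((N:ℝ)+1)^a * ((N:ℝ)+1)^(e-a) := by
      rw [← pow_add]; congr 1; omega
    have e2 : ((N:ℝ)+1)^a * ((e.factorial:ℝ)/((N:ℝ)+1)^e)
        = (e.factorial:ℝ)/((N:ℝ)+1)^(e-a) := by
      rw [e1]; field_simp
    rw [e2] at h1
    have h3 : (e.factorial:ℝ)/((N:ℝ)+1)^(e-a) ≤ (e.factorial:ℝ)/((N:ℝ)+1) := by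
      rw [div_le_div_iff₀ (by positivity) (by positivity)]
      calc (e.factorial:ℝ) * ((N:ℝ)+1) = (e.factorial:ℝ) * ((N:ℝ)+1)^1 := by ring
        _ ≤ (e.factorial:ℝ) * ((N:ℝ)+1)^(e-a) :=
            mul_le_mul_of_nonneg_left (pow_le_pow_right₀ hN1 (by omega)) (Nat.cast_nonneg _)
    have h4 : ch a N / ch e N ≤ (e.factorial:ℝ)/((N:ℝ)+1) := le_trans h1 h3
    calc u N = (((e:ℝ)+1)/((e:ℝ)-(a:ℝ))) * (ch a N / ch e N) := rfl
      _ ≤ (((e:ℝ)+1)/((e:ℝ)-(a:ℝ))) * ((e.factorial:ℝ)/((N:ℝ)+1)) :=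
          mul_le_mul_of_nonneg_left h4 hCpos
      _ = ((((e:ℝ)+1)/((e:ℝ)-(a:ℝ))) * (e.factorial:ℝ)) * (1/((N:ℝ)+1)) := by ring
  have hnn : ∀ N : ℕ, 0 ≤ u N := by
    intro N
    have := ch_pos a N; have := ch_pos e N
    apply mul_nonneg hCpos
    positivity
  have htail : Filter.Tendsto u Filter.atTop (nhds 0) := by
    apply squeeze_zero hnn hub
    have := tendsto_one_div_add_atTop_nhds_zero_nat.const_mul
      ((((e:ℝ)+1)/((e:ℝ)-(a:ℝ))) * (e.factorial:ℝ))
    simpa using this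
  have hlim1 := hsummable.hasSum.tendsto_sum_nat
  have hlim2 : Filter.Tendsto (fun N => ∑ k ∈ range N, ch a k / ch (e+1) k)
      Filter.atTop (nhds (u 0 - 0)) := by
    simp only [hpartial]
    exact Filter.Tendsto.sub tendsto_const_nhds htail
  have hval : ∑' k, ch a k / ch (e+1) k = u 0 - 0 := tendsto_nhds_unique hlim1 hlim2
  have hval2 : ∑' k, ch a k / ch (e+1) k = (((e:ℝ)+1)/((e:ℝ)-(a:ℝ))) := by
    rw [hval, hu0]; ring
  rw [← hval2]
  exact hsummable.hasSum

lemma gauss (b : ℕ) : ∀ a c : ℕ, a + b + 2 ≤ c →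
    ∑' k, ch a k * ch b k / ch c k
      = Real.Gamma ((c:ℝ)+1) * Real.Gamma ((c:ℝ)-(a:ℝ)-(b:ℝ)-1)
        / (Real.Gamma ((c:ℝ)-(a:ℝ)) * Real.Gamma ((c:ℝ)-(b:ℝ))) := by
  induction b with
  | zero =>
    intro a c h
    obtain ⟨e, rfl⟩ : ∃ e, c = e+1 := ⟨c-1, by omega⟩
    have hea : (0:ℝ) < (e:ℝ)-(a:ℝ) := by
      have : (a:ℝ)+1 ≤ (e:ℝ) := by exact_mod_cast (show a+1 ≤ e by omega)
      linarith
    have hbase := base_hasSum a e (by omega)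
    have hv : ∑' k, ch a k * ch 0 k / ch (e+1) k = ((e:ℝ)+1)/((e:ℝ)-(a:ℝ)) := by
      have : (fun k => ch a k * ch 0 k / ch (e+1) k) = fun k => ch a k / ch (e+1) k := by
        funext k; rw [ch_zero_left, mul_one]
      rw [this]
      exact hbase.tsum_eq
    rw [hv]
    have he1 : (0:ℝ) < (e:ℝ)+1 := by positivity
    have g1 : Real.Gamma (((e:ℝ)+1)+1) = ((e:ℝ)+1) * Real.Gamma ((e:ℝ)+1) :=
      Real.Gamma_add_one he1.ne'
    have g2 : Real.Gamma (((e:ℝ)-(a:ℝ))+1) = ((e:ℝ)-(a:ℝ)) * Real.Gamma ((e:ℝ)-(a:ℝ)) :=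
      Real.Gamma_add_one hea.ne'
    have hga : (0:ℝ) < Real.Gamma ((e:ℝ)+1) := Real.Gamma_pos_of_pos he1
    have hgb : (0:ℝ) < Real.Gamma ((e:ℝ)-(a:ℝ)) := Real.Gamma_pos_of_pos hea
    push_cast
    rw [show (e:ℝ)+1-(a:ℝ)-0-1 = (e:ℝ)-(a:ℝ) by ring,
        show (e:ℝ)+1-(a:ℝ) = ((e:ℝ)-(a:ℝ))+1 by ring,
        show (e:ℝ)+1-0 = (e:ℝ)+1 by ring, g1, g2]
    field_simp
  | succ b ih =>
    intro a c h
    have h1 : a + b + 2 ≤ c := by omega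
    have h2 : (a+1) + b + 2 ≤ c := by omega
    have hpw : ∀ k, ch a k * ch (b+1) k / ch c k
        = (ch a k * ch b k / ch c k)
          + (((a:ℝ)+1)/((b:ℝ)+1)) * ((ch (a+1) k * ch b k / ch c k)
              - (ch a k * ch b k / ch c k)) := by
      intro k
      have hb1 : ((b:ℝ)+1) ≠ 0 := by positivity
      have ha1 : ((a:ℝ)+1) ≠ 0 := by positivity
      have hB : ch (b+1) k = ch b k * ((b:ℝ)+(k:ℝ)+1) / ((b:ℝ)+1) := by
        rw [eq_div_iff hb1]; exact_mod_cast ch_ratio_a b k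
      have hA : ch (a+1) k = ch a k * ((a:ℝ)+(k:ℝ)+1) / ((a:ℝ)+1) := by
        rw [eq_div_iff ha1]; exact_mod_cast ch_ratio_a a k
      have hC : ch c k ≠ 0 := ch_ne c k
      rw [hB, hA]
      field_simp
      ring
    rw [tsum_congr hpw]
    have s1 := summable_D a b c h1
    have s2 := summable_D (a+1) b c h2
    rw [Summable.tsum_add s1 (Summable.mul_left _ (s2.sub s1)), tsum_mul_left,
        Summable.tsum_sub s2 s1, ih a c h1, ih (a+1) c h2]
    -- Gamma algebra
    have hcast : (a:ℝ) + (b:ℝ) + 3 ≤ (c:ℝ) := by exact_mod_cast (show a+b+3 ≤ c by omega)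
    have p1 : (0:ℝ) < (c:ℝ)-(a:ℝ)-(b:ℝ)-2 := by linarith
    have p2 : (0:ℝ) < (c:ℝ)-(a:ℝ)-1 := by linarith
    have p3 : (0:ℝ) < (c:ℝ)-(b:ℝ)-1 := by linarith
    have pc : (0:ℝ) < (c:ℝ)+1 := by positivity
    have e1 : Real.Gamma ((c:ℝ)-(a:ℝ)-(b:ℝ)-1)
        = ((c:ℝ)-(a:ℝ)-(b:ℝ)-2) * Real.Gamma ((c:ℝ)-(a:ℝ)-(b:ℝ)-2) := by
      have hh := Real.Gamma_add_one p1.ne'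
      rw [show ((c:ℝ)-(a:ℝ)-(b:ℝ)-2)+1 = (c:ℝ)-(a:ℝ)-(b:ℝ)-1 by ring] at hh
      exact hh
    have e2 : Real.Gamma ((c:ℝ)-(a:ℝ))
        = ((c:ℝ)-(a:ℝ)-1) * Real.Gamma ((c:ℝ)-(a:ℝ)-1) := by
      have hh := Real.Gamma_add_one p2.ne'
      rw [show ((c:ℝ)-(a:ℝ)-1)+1 = (c:ℝ)-(a:ℝ) by ring] at hh
      exact hh
    have e3 : Real.Gamma ((c:ℝ)-(b:ℝ))
        = ((c:ℝ)-(b:ℝ)-1) * Real.Gamma ((c:ℝ)-(b:ℝ)-1) := by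
      have hh := Real.Gamma_add_one p3.ne'
      rw [show ((c:ℝ)-(b:ℝ)-1)+1 = (c:ℝ)-(b:ℝ) by ring] at hh
      exact hh
    have q1 : (0:ℝ) < Real.Gamma ((c:ℝ)-(a:ℝ)-(b:ℝ)-2) := Real.Gamma_pos_of_pos p1
    have q2 : (0:ℝ) < Real.Gamma ((c:ℝ)-(a:ℝ)-1) := Real.Gamma_pos_of_pos p2
    have q3 : (0:ℝ) < Real.Gamma ((c:ℝ)-(b:ℝ)-1) := Real.Gamma_pos_of_pos p3
    have qc : (0:ℝ) < Real.Gamma ((c:ℝ)+1) := Real.Gamma_pos_of_pos pc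
    push_cast
    rw [show (c:ℝ)-(a:ℝ)-((b:ℝ)+1)-1 = (c:ℝ)-(a:ℝ)-(b:ℝ)-2 by ring,
        show (c:ℝ)-((b:ℝ)+1) = (c:ℝ)-(b:ℝ)-1 by ring,
        show (c:ℝ)-((a:ℝ)+1)-(b:ℝ)-1 = (c:ℝ)-(a:ℝ)-(b:ℝ)-2 by ring,
        show (c:ℝ)-((a:ℝ)+1) = (c:ℝ)-(a:ℝ)-1 by ring,
        e1, e2, e3]
    field_simp
    ring




/-- splitting of the binomial ratio under index shift -/
lemma nat_split (A l i : ℕ) : (A+(l+i)).choose (l+i) * (l+i).factorial * A.factorial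
    = ((A+i).choose i * i.factorial) * (((A+i)+l).choose l * l.factorial) * A.factorial := by
  have e1 : (A+(l+i)).choose (l+i) * (l+i).factorial * A.factorial = (A+(l+i)).factorial := by
    have := Nat.choose_mul_factorial_mul_factorial (n := A+(l+i)) (k := l+i) (by omega)
    simpa [show A+(l+i)-(l+i) = A by omega] using this
  have e2 : (A+i).choose i * i.factorial * A.factorial = (A+i).factorial := by
    have := Nat.choose_mul_factorial_mul_factorial (n := A+i) (k := i) (by omega)
    simpa [show A+i-i = A by omega] using this
  have e3 : ((A+i)+l).choose l * l.factorial * (A+i).factorial = ((A+i)+l).factorial := by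
    have := Nat.choose_mul_factorial_mul_factorial (n := (A+i)+l) (k := l) (by omega)
    simpa [show (A+i)+l-l = A+i by omega] using this
  calc (A+(l+i)).choose (l+i) * (l+i).factorial * A.factorial
      = (A+(l+i)).factorial := e1
    _ = ((A+i)+l).factorial := by congr 1; omega
    _ = ((A+i)+l).choose l * l.factorial * (A+i).factorial := e3.symm
    _ = ((A+i)+l).choose l * l.factorial * ((A+i).choose i * i.factorial * A.factorial) := by
        rw [e2]
    _ = ((A+i).choose i * i.factorial) * (((A+i)+l).choose l * l.factorial) * A.factorial := by
        ring

lemma ch_split (A l i : ℕ) : ch A (l+i) * ((l+i).factorial : ℝ)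
    = (ch A i * (i.factorial:ℝ)) * (ch (A+i) l * (l.factorial:ℝ)) := by
  have h3 : (((A+(l+i)).choose (l+i) * (l+i).factorial : ℕ) : ℝ)
      = ((((A+i).choose i * i.factorial) * (((A+i)+l).choose l * l.factorial) : ℕ) : ℝ) := by
    have := Nat.eq_of_mul_eq_mul_right (Nat.factorial_pos A) (nat_split A l i)
    exact_mod_cast this
  push_cast at h3
  unfold ch
  push_cast
  linear_combination h3

lemma ch_shift (A B l i : ℕ) :
    ch A (l+i) / ch B (l+i) = (ch A i / ch B i) * (ch (A+i) l / ch (B+i) l) := by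
  have hA := ch_split A l i
  have hB := ch_split B l i
  have hli : ((l+i).factorial : ℝ) ≠ 0 := by
    exact_mod_cast (Nat.factorial_pos (l+i)).ne'
  have hAe : ch A (l+i) = (ch A i * (i.factorial:ℝ)) * (ch (A+i) l * (l.factorial:ℝ))
      / ((l+i).factorial : ℝ) := by
    rw [eq_div_iff hli]; exact hA
  have hBe : ch B (l+i) = (ch B i * (i.factorial:ℝ)) * (ch (B+i) l * (l.factorial:ℝ))
      / ((l+i).factorial : ℝ) := by
    rw [eq_div_iff hli]; exact hB
  rw [hAe, hBe]
  have h1 := ch_ne B i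
  have h2 := ch_ne (B+i) l
  have hi : (i.factorial : ℝ) ≠ 0 := by exact_mod_cast (Nat.factorial_pos i).ne'
  have hl : (l.factorial : ℝ) ≠ 0 := by exact_mod_cast (Nat.factorial_pos l).ne'
  field_simp

/-- The evaluation of `₃F₂(j, m, n; p, 1; 1)` with all parameters positive integers as a
finite sum.  The sum `Σ_{k=0}^{min (j-1) (n-1)}` is expressed as a sum over
`range (min j n)`. -/
theorem positive_integer_3F2 (j m n p : ℕ) (hj : 0 < j) (hm : 0 < m) (hn : 0 < n)
    (hp : 0 < p) (hconv : j + m + n < p + 1) :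
    Summable (fun k : ℕ =>
      poch (j : ℝ) k * poch (m : ℝ) k * poch (n : ℝ) k /
        (poch (p : ℝ) k * ((k.factorial : ℝ)) ^ 2)) ∧
    ∑' k : ℕ,
        poch (j : ℝ) k * poch (m : ℝ) k * poch (n : ℝ) k /
          (poch (p : ℝ) k * ((k.factorial : ℝ)) ^ 2) =
      Real.Gamma (n : ℝ) * Real.Gamma (j : ℝ) * Real.Gamma (p : ℝ) *
          Real.Gamma ((p : ℝ) - (m : ℝ) + 1 - (j : ℝ) - (n : ℝ)) /
          (Real.Gamma (m : ℝ) * Real.Gamma ((p : ℝ) - (m : ℝ))) *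
        ∑ k ∈ range (min j n),
          Real.Gamma ((m : ℝ) + (k : ℝ)) /
            (Real.Gamma ((n : ℝ) - (k : ℝ)) * Real.Gamma ((j : ℝ) - (k : ℝ)) *
              ((k.factorial : ℝ)) ^ 2 *
              Real.Gamma ((p : ℝ) + 1 - (j : ℝ) - (n : ℝ) + (k : ℝ))) := by
  obtain ⟨J, rfl⟩ : ∃ J, j = J+1 := ⟨j-1, by omega⟩
  obtain ⟨M, rfl⟩ : ∃ M, m = M+1 := ⟨m-1, by omega⟩
  obtain ⟨N, rfl⟩ : ∃ N, n = N+1 := ⟨n-1, by omega⟩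
  obtain ⟨W, rfl⟩ : ∃ W, p = M+J+N+2+W+1 := ⟨p - (M+J+N+2) - 1, by omega⟩
  set P := M+J+N+2+W with hP
  -- `p = P+1`
  have hcond : J + M + N + 2 ≤ P := by omega
  have hterm : ∀ k : ℕ, poch (((J+1:ℕ)) : ℝ) k * poch (((M+1:ℕ)) : ℝ) k * poch (((N+1:ℕ)) : ℝ) k /
        (poch (((P+1:ℕ)) : ℝ) k * ((k.factorial : ℝ)) ^ 2)
      = ch J k * ch M k * ch N k / ch P k := by
    intro k
    have pj : poch (((J+1:ℕ)) : ℝ) k = ch J k * k.factorial := by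
      rw [show (((J+1:ℕ)) : ℝ) = (J:ℝ)+1 by push_cast; ring]; exact poch_nat J k
    have pm : poch (((M+1:ℕ)) : ℝ) k = ch M k * k.factorial := by
      rw [show (((M+1:ℕ)) : ℝ) = (M:ℝ)+1 by push_cast; ring]; exact poch_nat M k
    have pn : poch (((N+1:ℕ)) : ℝ) k = ch N k * k.factorial := by
      rw [show (((N+1:ℕ)) : ℝ) = (N:ℝ)+1 by push_cast; ring]; exact poch_nat N k
    have pp : poch (((P+1:ℕ)) : ℝ) k = ch P k * k.factorial := by
      rw [show (((P+1:ℕ)) : ℝ) = (P:ℝ)+1 by push_cast; ring]; exact poch_nat P k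
    rw [pj, pm, pn, pp]
    have hkf : (k.factorial : ℝ) ≠ 0 := by
      exact_mod_cast (Nat.factorial_pos k).ne'
    have := ch_ne P k
    field_simp
  have hfun : (fun k : ℕ => poch (((J+1:ℕ)) : ℝ) k * poch (((M+1:ℕ)) : ℝ) k * poch (((N+1:ℕ)) : ℝ) k /
        (poch (((P+1:ℕ)) : ℝ) k * ((k.factorial : ℝ)) ^ 2))
      = fun k => ch J k * ch M k * ch N k / ch P k := funext hterm
  have hsummable : Summable (fun k => ch J k * ch M k * ch N k / ch P k) :=
    summable_E J M N P (by omega)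
  constructor
  · exact hfun ▸ hsummable
  -- the series evaluation
  set μ := min (J+1) (N+1) with hμ
  set Q : ℕ → ℝ := fun k => ch M k / ch P k with hQ
  set g : ℕ → ℕ → ℝ := fun i k =>
    if i ≤ k then (J.choose i * N.choose i : ℝ) * ch (J+N) (k-i) * Q k else 0 with hg
  have hdecomp : ∀ k, ch J k * ch M k * ch N k / ch P k = ∑ i ∈ range μ, g i k := by
    intro k
    have hs : ch J k * ch N k
        = ∑ i ∈ range (k+1), (J.choose i * N.choose i : ℝ) * ch (J+N) (k-i) := by
      have h0 := suranyi J N k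
      have hc := congrArg (fun t : ℕ => (t : ℝ)) h0
      push_cast at hc
      unfold ch
      exact_mod_cast hc
    have step1 : ch J k * ch M k * ch N k / ch P k = (ch J k * ch N k) * Q k := by
      rw [hQ]; ring
    rw [step1, hs, Finset.sum_mul]
    have step2 : ∀ i ∈ range (k+1),
        (J.choose i * N.choose i : ℝ) * ch (J+N) (k-i) * Q k
          = if i ≤ k then (J.choose i * N.choose i : ℝ) * ch (J+N) (k-i) * Q k else 0 := by
      intro i hi
      simp only [mem_range] at hi
      rw [if_pos (by omega)]
    rw [Finset.sum_congr rfl step2]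
    -- extend to range (max (k+1) μ), then shrink to range μ
    have hsub1 : range (k+1) ⊆ range (max (k+1) μ) := by
      apply Finset.range_subset_range.mpr; omega
    have hsub2 : range μ ⊆ range (max (k+1) μ) := by
      apply Finset.range_subset_range.mpr; omega
    rw [Finset.sum_subset hsub1 ?h1, ← Finset.sum_subset hsub2 ?h2]
    case h1 =>
      intro i _ hi2
      simp only [mem_range] at hi2
      rw [if_neg (by omega)]
    case h2 =>
      intro i _ hi2
      simp only [mem_range, hμ] at hi2
      have hz : (J.choose i * N.choose i : ℝ) = 0 := by
        have : J.choose i = 0 ∨ N.choose i = 0 := by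
          rcases Nat.lt_or_ge J i with h | h
          · exact Or.inl (Nat.choose_eq_zero_of_lt h)
          · exact Or.inr (Nat.choose_eq_zero_of_lt (by omega))
        rcases this with h | h <;> simp [h]
      by_cases hik : i ≤ k
      · rw [if_pos hik, hz]; ring
      · rw [if_neg hik]
  -- per-i summability and value
  have hκ : ∀ i, ∀ l, g i (l+i)
      = ((J.choose i * N.choose i : ℝ) * (ch M i / ch P i))
        * (ch (M+i) l * ch (J+N) l / ch (P+i) l) := by
    intro i l
    have hle : i ≤ l+i := by omega
    simp only [hg, if_pos hle, hQ]
    rw [show l+i-i = l by omega]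
    rw [ch_shift M P l i]
    ring
  have hgsum : ∀ i, Summable (g i) := by
    intro i
    apply (summable_nat_add_iff i).mp
    apply Summable.congr (((summable_D (M+i) (J+N) (P+i)) (by omega)).mul_left
      ((J.choose i * N.choose i : ℝ) * (ch M i / ch P i)))
    intro l
    exact (hκ i l).symm
  have hgval : ∀ i, ∑' k, g i k
      = ((J.choose i * N.choose i : ℝ) * (ch M i / ch P i))
        * (Real.Gamma (((P+i:ℕ):ℝ)+1) * Real.Gamma (((P+i:ℕ):ℝ)-((M+i:ℕ):ℝ)-((J+N:ℕ):ℝ)-1)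
            / (Real.Gamma (((P+i:ℕ):ℝ)-((M+i:ℕ):ℝ)) * Real.Gamma (((P+i:ℕ):ℝ)-((J+N:ℕ):ℝ)))) := by
    intro i
    have h1 := Summable.sum_add_tsum_nat_add (f := g i) i (hgsum i)
    have h2 : ∑ k ∈ range i, g i k = 0 := by
      apply Finset.sum_eq_zero
      intro k hk
      simp only [mem_range] at hk
      simp only [hg]
      rw [if_neg (by omega)]
    rw [← h1, h2, zero_add, tsum_congr (hκ i), tsum_mul_left,
        gauss (J+N) (M+i) (P+i) (by omega)]
  rw [hfun, tsum_congr hdecomp, Summable.tsum_finsetSum (fun i _ => hgsum i)]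
  rw [Finset.sum_congr rfl (fun i _ => hgval i)]
  rw [Finset.mul_sum]
  apply Finset.sum_congr rfl
  intro i hi
  simp only [mem_range, hμ] at hi
  have hiJ : i ≤ J := by omega
  have hiN : i ≤ N := by omega
  have F : ∀ t : ℕ, (t.factorial : ℝ) ≠ 0 := fun t => by
    exact_mod_cast (Nat.factorial_pos t).ne'
  have A1 : Real.Gamma (((P+i:ℕ):ℝ) + 1) = ((P+i).factorial : ℝ) :=
    Real.Gamma_nat_eq_factorial (P+i)
  have A2 : Real.Gamma (((P+i:ℕ):ℝ) - ((M+i:ℕ):ℝ) - ((J+N:ℕ):ℝ) - 1) = (W.factorial : ℝ) := by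
    rw [show ((P+i:ℕ):ℝ) - ((M+i:ℕ):ℝ) - ((J+N:ℕ):ℝ) - 1 = (W:ℝ)+1 by
      simp only [hP]; push_cast; ring]
    exact Real.Gamma_nat_eq_factorial W
  have A3 : Real.Gamma (((P+i:ℕ):ℝ) - ((M+i:ℕ):ℝ)) = ((J+N+1+W).factorial : ℝ) := by
    rw [show ((P+i:ℕ):ℝ) - ((M+i:ℕ):ℝ) = ((J+N+1+W : ℕ):ℝ)+1 by
      simp only [hP]; push_cast; ring]
    exact Real.Gamma_nat_eq_factorial _
  have A4 : Real.Gamma (((P+i:ℕ):ℝ) - ((J+N:ℕ):ℝ)) = ((M+W+1+i).factorial : ℝ) := by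
    rw [show ((P+i:ℕ):ℝ) - ((J+N:ℕ):ℝ) = ((M+W+1+i : ℕ):ℝ)+1 by
      simp only [hP]; push_cast; ring]
    exact Real.Gamma_nat_eq_factorial _
  have B1 : Real.Gamma (((N+1:ℕ)):ℝ) = (N.factorial : ℝ) := by
    rw [show (((N+1:ℕ)):ℝ) = (N:ℝ)+1 by push_cast; ring]
    exact Real.Gamma_nat_eq_factorial N
  have B2 : Real.Gamma (((J+1:ℕ)):ℝ) = (J.factorial : ℝ) := by
    rw [show (((J+1:ℕ)):ℝ) = (J:ℝ)+1 by push_cast; ring]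
    exact Real.Gamma_nat_eq_factorial J
  have B3 : Real.Gamma (((P+1:ℕ)):ℝ) = (P.factorial : ℝ) := by
    rw [show (((P+1:ℕ)):ℝ) = (P:ℝ)+1 by push_cast; ring]
    exact Real.Gamma_nat_eq_factorial P
  have B4 : Real.Gamma (((P+1:ℕ):ℝ) - ((M+1:ℕ):ℝ) + 1 - ((J+1:ℕ):ℝ) - ((N+1:ℕ):ℝ))
      = (W.factorial : ℝ) := by
    rw [show ((P+1:ℕ):ℝ) - ((M+1:ℕ):ℝ) + 1 - ((J+1:ℕ):ℝ) - ((N+1:ℕ):ℝ) = (W:ℝ)+1 by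
      simp only [hP]; push_cast; ring]
    exact Real.Gamma_nat_eq_factorial W
  have B5 : Real.Gamma (((M+1:ℕ)):ℝ) = (M.factorial : ℝ) := by
    rw [show (((M+1:ℕ)):ℝ) = (M:ℝ)+1 by push_cast; ring]
    exact Real.Gamma_nat_eq_factorial M
  have B6 : Real.Gamma (((P+1:ℕ):ℝ) - ((M+1:ℕ):ℝ)) = ((J+N+1+W).factorial : ℝ) := by
    rw [show ((P+1:ℕ):ℝ) - ((M+1:ℕ):ℝ) = ((J+N+1+W : ℕ):ℝ)+1 by
      simp only [hP]; push_cast; ring]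
    exact Real.Gamma_nat_eq_factorial _
  have B7 : Real.Gamma (((M+1:ℕ):ℝ) + (i:ℝ)) = ((M+i).factorial : ℝ) := by
    rw [show ((M+1:ℕ):ℝ) + (i:ℝ) = ((M+i : ℕ):ℝ)+1 by push_cast; ring]
    exact Real.Gamma_nat_eq_factorial _
  have B8 : Real.Gamma (((N+1:ℕ):ℝ) - (i:ℝ)) = ((N-i).factorial : ℝ) := by
    rw [show ((N+1:ℕ):ℝ) - (i:ℝ) = ((N-i : ℕ):ℝ)+1 by push_cast [Nat.cast_sub hiN]; ring]
    exact Real.Gamma_nat_eq_factorial _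
  have B9 : Real.Gamma (((J+1:ℕ):ℝ) - (i:ℝ)) = ((J-i).factorial : ℝ) := by
    rw [show ((J+1:ℕ):ℝ) - (i:ℝ) = ((J-i : ℕ):ℝ)+1 by push_cast [Nat.cast_sub hiJ]; ring]
    exact Real.Gamma_nat_eq_factorial _
  have B10 : Real.Gamma (((P+1:ℕ):ℝ) + 1 - ((J+1:ℕ):ℝ) - ((N+1:ℕ):ℝ) + (i:ℝ))
      = ((M+W+1+i).factorial : ℝ) := by
    rw [show ((P+1:ℕ):ℝ) + 1 - ((J+1:ℕ):ℝ) - ((N+1:ℕ):ℝ) + (i:ℝ) = ((M+W+1+i : ℕ):ℝ)+1 by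
      simp only [hP]; push_cast; ring]
    exact Real.Gamma_nat_eq_factorial _
  have C1 : (J.choose i : ℝ) = (J.factorial : ℝ) / ((i.factorial : ℝ) * ((J-i).factorial : ℝ)) := by
    rw [Nat.cast_choose ℝ hiJ]
  have C2 : (N.choose i : ℝ) = (N.factorial : ℝ) / ((i.factorial : ℝ) * ((N-i).factorial : ℝ)) := by
    rw [Nat.cast_choose ℝ hiN]
  have C3 : ch M i = ((M+i).factorial : ℝ) / ((i.factorial : ℝ) * (M.factorial : ℝ)) := by
    unfold ch
    rw [Nat.cast_choose ℝ (show i ≤ M+i by omega), show M+i-i = M by omega]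
  have C4 : ch P i = ((P+i).factorial : ℝ) / ((i.factorial : ℝ) * (P.factorial : ℝ)) := by
    unfold ch
    rw [Nat.cast_choose ℝ (show i ≤ P+i by omega), show P+i-i = P by omega]
  rw [A1, A2, A3, A4, B1, B2, B3, B4, B5, B6, B7, B8, B9, B10, C1, C2, C3, C4]
  field_simp
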